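/- arXiv:1008.2728 — 4 statements merged into one kernel-verified Lean document; each statement's English description precedes it below -/
import Mathlib

section
/- In the polynomial ring F[d] over a commutative ring F, let M_d denote multiplication by d and D_d differentiation with respect to d, as linear operators. Then for all natural numbers m, n: D_d^m ∘ M_d^n = Σ_{i=0}^{min(m,n)} i! · C(m,i) · C(n,i) · M_d^{n−i} ∘ D_d^{m−i}, where C denotes the binomial coefficient. -/
noncomputable def Md (F : Type*) [CommRing F] : Module.End F (Polynomial F) :=
  LinearMap.mulLeft F Polynomial.X

noncomputable def Dd (F : Type*) [CommRing F] : Module.End F (Polynomial F) :=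
  Polynomial.derivative

/-! Evaluated at a polynomial `p`, the left side is `D^m (p X^n)`. The Leibniz rule expands it
into the terms `C(m,i) D^{m-i} p · D^i (X^n)`, and `D^i (X^n) = n (n-1) ⋯ (n-i+1) X^{n-i}`
with `n (n-1) ⋯ (n-i+1) = i! C(n,i)`, which vanishes for `i > n`. -/

open Polynomial

section

variable {F : Type*} [CommRing F]

theorem Md_pow_apply (n : ℕ) (p : F[X]) : (Md F ^ n) p = X ^ n * p := by
  rw [Md, LinearMap.pow_mulLeft, LinearMap.mulLeft_apply]

theorem Dd_pow_apply (n : ℕ) (p : F[X]) : (Dd F ^ n) p = derivative^[n] p := by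
  rw [Module.End.pow_apply, Dd]

end

/-- In `F[d]` over a commutative ring `F`:
`D_d^m ∘ M_d^n = Σ_{i=0}^{min(m,n)} i! C(m,i) C(n,i) M_d^{n-i} ∘ D_d^{m-i}`. -/
theorem stmt1 (F : Type*) [CommRing F] (m n : ℕ) :
    (Dd F) ^ m * (Md F) ^ n =
      ∑ i ∈ Finset.range (min m n + 1),
        (i.factorial * m.choose i * n.choose i) •
          ((Md F) ^ (n - i) * (Dd F) ^ (m - i)) := by
  refine LinearMap.ext fun p => ?_
  rw [Module.End.mul_apply, Md_pow_apply, Dd_pow_apply, mul_comm, iterate_derivative_mul_X_pow,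
    min_comm, LinearMap.sum_apply]
  refine Finset.sum_congr rfl fun i _ => ?_
  rw [LinearMap.smul_apply, Module.End.mul_apply, Md_pow_apply, Dd_pow_apply, mul_comm (X ^ _),
    Nat.descFactorial_eq_factorial_mul_choose]
  congr 1
  ring
end

section
/- Let A be an alternative algebra over a field of characteristic ≠ 2 (i.e., (x,x,y) = 0 and (y,x,x) = 0 for all x,y, where (x,y,z) = (xy)z − x(yz)). Then the commutator algebra A^−, with bracket [x,y] = xy − yx, satisfies the Malcev identity: [J(x,y,z), x] = J(x, y, [x,z]) for all x, y, z, where J(x,y,z) = [[x,y],z] + [[y,z],x] + [[z,x],y]. -/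
/-- The commutator bracket `[x,y] = xy − yx`. -/
def br {A : Type*} [Mul A] [Sub A] (x y : A) : A := x * y - y * x

/-- The Jacobian `J(x,y,z) = [[x,y],z] + [[y,z],x] + [[z,x],y]`. -/
def Jac {A : Type*} [Mul A] [Sub A] [Add A] (x y z : A) : A :=
  br (br x y) z + br (br y z) x + br (br z x) y

/-!
In an alternative ring the associator is alternating, so the Jacobian of the commutator bracket,
which in any ring is the alternating sum of the six permuted associators, equals `6 (x,y,z)`.
The Malcev identity thus reduces to `[(x,y,z),x] = (x,y,[x,z])`, which is the sum of two
instances of the Teichmüller identity `associator_cocycle` once the associators in them are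
brought to a common form by alternation.
-/

section Alternative

variable {A : Type*} [NonUnitalNonAssocRing A]

theorem br_nsmul_left (n : ℕ) (a b : A) : br (n • a) b = n • br a b := by
  rw [br, br, smul_mul_assoc, mul_smul_comm, smul_sub]

theorem jac_eq_alternating_sum_associator (x y z : A) :
    Jac x y z = associator x y z - associator x z y + associator y z x - associator y x z
      + associator z x y - associator z y x := by
  simp only [Jac, br, associator_apply, mul_sub, sub_mul]
  abel

theorem associator_swap_left (hl : ∀ x y : A, x * x * y = x * (x * y)) (x y z : A) :
    associator y x z = -associator x y z := by
  have h := hl (x + y) z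
  simp only [add_mul, mul_add, hl] at h
  rw [associator_apply, associator_apply]
  linear_combination (norm := abel1) h

theorem associator_swap_right (hr : ∀ x y : A, y * x * x = y * (x * x)) (x y z : A) :
    associator x z y = -associator x y z := by
  have h := hr (y + z) x
  simp only [add_mul, mul_add, hr] at h
  rw [associator_apply, associator_apply]
  linear_combination (norm := abel1) h

theorem associator_cyclic (hl : ∀ x y : A, x * x * y = x * (x * y))
    (hr : ∀ x y : A, y * x * x = y * (x * x)) (x y z : A) :
    associator y z x = associator x y z := by
  rw [associator_swap_right hr, associator_swap_left hl, neg_neg]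

theorem associator_flexible (hl : ∀ x y : A, x * x * y = x * (x * y))
    (hr : ∀ x y : A, y * x * x = y * (x * x)) (x y : A) :
    associator x y x = 0 := by
  rw [associator_swap_right hr, associator_apply, hl, sub_self, neg_zero]

theorem jac_eq_six_nsmul_associator (hl : ∀ x y : A, x * x * y = x * (x * y))
    (hr : ∀ x y : A, y * x * x = y * (x * x)) (x y z : A) :
    Jac x y z = 6 • associator x y z := by
  rw [jac_eq_alternating_sum_associator, associator_swap_right hr x y z,
    associator_swap_left hl x y z, associator_swap_right hr z x y, associator_cyclic hl hr y z x,
    associator_cyclic hl hr x y z]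
  abel

theorem associator_br_right (hl : ∀ x y : A, x * x * y = x * (x * y))
    (hr : ∀ x y : A, y * x * x = y * (x * x)) (x y z : A) :
    associator x y (br x z) = br (associator x y z) x := by
  have h₁ := associator_cocycle x y x z
  have h₂ := associator_cocycle z x y x
  rw [associator_swap_left hl x y z, associator_flexible hl hr, mul_neg, zero_mul] at h₁
  rw [associator_flexible hl hr, mul_zero, ← associator_cyclic hl hr z (x * y) x,
    ← associator_cyclic hl hr z x (y * x), associator_cyclic hl hr x (z * x) y,
    associator_swap_right hr x y (z * x), associator_cyclic hl hr y z x,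
    associator_cyclic hl hr x y z] at h₂
  have hsub : associator x y (x * z - z * x) = associator x y (x * z) - associator x y (z * x) := by
    simp only [associator_apply, mul_sub]
    abel
  simp only [br]
  linear_combination (norm := abel1) hsub - h₁ - h₂

end Alternative

theorem stmt5_general
    (A : Type*) [NonUnitalNonAssocRing A]
    (alt1 : ∀ x y : A, (x * x) * y = x * (x * y))
    (alt2 : ∀ x y : A, (y * x) * x = y * (x * x))
    (x y z : A) :
    br (Jac x y z) x = Jac x y (br x z) := by
  rw [jac_eq_six_nsmul_associator alt1 alt2, jac_eq_six_nsmul_associator alt1 alt2,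
    br_nsmul_left, associator_br_right alt1 alt2]

/-- If `A` is an alternative algebra over a field of characteristic `≠ 2`, then
the commutator algebra `A⁻` satisfies the Malcev identity
`[J(x,y,z),x] = J(x,y,[x,z])`. -/
theorem stmt5 (F : Type*) [Field F] (h2 : ringChar F ≠ 2)
    (A : Type*) [NonUnitalNonAssocRing A] [Module F A]
    [SMulCommClass F A A] [IsScalarTower F A A]
    (alt1 : ∀ x y : A, (x * x) * y = x * (x * y))
    (alt2 : ∀ x y : A, (y * x) * x = y * (x * x))
    (x y z : A) :
    br (Jac x y z) x = Jac x y (br x z) :=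
  stmt5_general A alt1 alt2 x y z
end

section
/- Let F be a field of characteristic ≠ 2,3 and let A be the F-algebra with basis { a^i b^j c^k d^ℓ : i,j,k,ℓ ≥ 0 } ∪ { a^i b^j d^ℓ e : i,j,ℓ ≥ 0 } (monomials of 'type 2' and 'type 1' respectively), and multiplication defined by: (type 1)·(type 1) = 0; (a^i b^j c^k d^ℓ)·(a^p b^q d^s e) = δ_{k,0} a^{i+p} b^{j+q} d^{ℓ+s} e; (a^i b^j d^ℓ e)·(a^p b^q c^r d^s) = δ_{r,0} a^{i+p} b^{j+q} d^{ℓ+s} e; and (a^i b^j c^k d^ℓ)·(a^p b^q c^r d^s) = Σ_{μ=0}^{j} (−1)^μ μ! C(j,μ) C(p,μ) a^{i+p−μ} b^{j+q−μ} c^{k+r+μ} d^{ℓ+s} + δ_{k,0} δ_{r,0} (ijs/6 − iℓq/6 + jℓp/2 + jps/3 − ℓpq/3) a^{i+p−1} b^{j+q−1} d^{ℓ+s−1} e − δ_{k,0} δ_{r,1} ℓ a^{i+p} b^{j+q} d^{ℓ+s−1} e. Then the associator of three type-2 basis monomials in A equals: (a^i b^j c^k d^ℓ, a^p b^q c^r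 d^s, a^v b^w c^x d^y) = δ_{k,0} δ_{r,0} δ_{x,0} (1/6)(iqy − isw − jpy + jsv + ℓpw − ℓqv) a^{i+p+v−1} b^{j+q+w−1} d^{ℓ+s+y−1} e. -/
/-!
The product of two type-2 monomials splits as `mulHeis + mulCocycle`. Here `mulHeis` is the
PBW product of `U(𝔥) ⊗ F[d]`, with `𝔥` the Heisenberg algebra `[a, b] = c`, and `mulCocycle`
takes values in the span `E` of the type-1 monomials. Since `E * E = 0` and type-2 monomials
act on `E` through `c ↦ 0`, associativity of `mulHeis` makes the associator of three type-2
monomials the Hochschild coboundary `φ(xy, z) + φ(x, y) z - φ(x, yz) - x φ(y, z)` of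
`φ = mulCocycle`, in which only the terms of `xy` and `yz` of `c`-degree at most one survive.
Associativity of `mulHeis` is the identity obtained by computing the coefficient of `cᵗ` in
`bʲ aᵖ b^q a^v` in the two possible ways.
-/

open Finset

/-- Index type for the monomial basis of the universal alternative enveloping
algebra `A(𝕄)`: type-2 monomials `aⁱ bʲ cᵏ dˡ` (`Sum.inl (i,j,k,l)`) and
type-1 monomials `aⁱ bʲ dˡ e` (`Sum.inr (i,j,l)`). -/
abbrev Mon : Type := (ℕ × ℕ × ℕ × ℕ) ⊕ (ℕ × ℕ × ℕ)

variable (F : Type*) [Field F]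

/-- The type-2 basis monomial `aⁱ bʲ cᵏ dˡ`. -/
noncomputable def t2 (i j k l : ℕ) : Mon →₀ F :=
  Finsupp.single (Sum.inl (i, j, k, l)) 1

/-- The type-1 basis monomial `aⁱ bʲ dˡ e`. -/
noncomputable def t1 (i j l : ℕ) : Mon →₀ F :=
  Finsupp.single (Sum.inr (i, j, l)) 1

/-- Product of two basis monomials, given by the structure constants of the
theorem "Alternative structure constants". -/
noncomputable def mulMon : Mon → Mon → (Mon →₀ F)
  | Sum.inr _, Sum.inr _ => 0
  | Sum.inl (i, j, k, l), Sum.inr (p, q, s) =>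
      if k = 0 then t1 F (i + p) (j + q) (l + s) else 0
  | Sum.inr (i, j, l), Sum.inl (p, q, r, s) =>
      if r = 0 then t1 F (i + p) (j + q) (l + s) else 0
  | Sum.inl (i, j, k, l), Sum.inl (p, q, r, s) =>
      (∑ μ ∈ range (j + 1),
        ((-1 : F) ^ μ * μ.factorial * j.choose μ * p.choose μ) •
          t2 F (i + p - μ) (j + q - μ) (k + r + μ) (l + s))
      + (if k = 0 ∧ r = 0 then
          ((i : F) * j * s / 6 - (i : F) * l * q / 6 + (j : F) * l * p / 2
            + (j : F) * p * s / 3 - (l : F) * p * q / 3) •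
            t1 F (i + p - 1) (j + q - 1) (l + s - 1)
         else 0)
      - (if k = 0 ∧ r = 1 then
          (l : F) • t1 F (i + p) (j + q) (l + s - 1)
         else 0)

/-- The bilinear multiplication of `A(𝕄)`. -/
noncomputable def mulA (x y : Mon →₀ F) : Mon →₀ F :=
  x.sum fun mx cx => y.sum fun my cy => (cx * cy) • mulMon F mx my

/-- The associator `(x,y,z) = (xy)z − x(yz)` in `A(𝕄)`. -/
noncomputable def assocA (x y z : Mon →₀ F) : Mon →₀ F :=
  mulA F (mulA F x y) z - mulA F x (mulA F y z)

namespace Nat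

theorem descFactorial_add_eq_sum (m n k : ℕ) :
    (m + n).descFactorial k
      = ∑ a ∈ range (k + 1), k.choose a * (m.descFactorial a * n.descFactorial (k - a)) := by
  rw [descFactorial_eq_factorial_mul_choose, add_choose_eq,
    Finset.Nat.sum_antidiagonal_eq_sum_range_succ_mk, Finset.mul_sum]
  refine sum_congr rfl fun a ha => ?_
  rw [descFactorial_eq_factorial_mul_choose, descFactorial_eq_factorial_mul_choose,
    ← choose_mul_factorial_mul_factorial (Nat.lt_succ_iff.1 (mem_range.1 ha))]
  ring

theorem descFactorial_mul_descFactorial_sub (n a b : ℕ) :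
    n.descFactorial a * (n - a).descFactorial b = n.descFactorial (a + b) := by
  simpa [mul_comm] using descFactorial_mul_descFactorial (n := n) (Nat.le_add_right a b)

theorem descFactorial_mul_descFactorial_sub_comm (n a b : ℕ) :
    n.descFactorial a * (n - a).descFactorial b = n.descFactorial b * (n - b).descFactorial a := by
  rw [descFactorial_mul_descFactorial_sub, descFactorial_mul_descFactorial_sub, add_comm]

theorem choose_mul_descFactorial_eq_sum (m n v k : ℕ) :
    (m + n).choose k * v.descFactorial k
      = ∑ b ∈ range (k + 1),
          m.choose b * n.choose (k - b) * (v.descFactorial b * (v - b).descFactorial (k - b)) := by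
  rw [add_choose_eq,
    Finset.Nat.sum_antidiagonal_eq_sum_range_succ (fun b c => m.choose b * n.choose c), sum_mul]
  refine sum_congr rfl fun b hb => ?_
  rw [descFactorial_mul_descFactorial_sub, Nat.add_sub_cancel' (Nat.lt_succ_iff.1 (mem_range.1 hb))]

/-- Both sides expand, by the two Vandermonde identities, into the same sum over `a + b + c = t`. -/
theorem sum_choose_mul_descFactorial_comm (j p q v t : ℕ) :
    ∑ a ∈ range (t + 1),
        j.choose a * p.descFactorial a * ((j + q - a).choose (t - a) * v.descFactorial (t - a))
      = ∑ c ∈ range (t + 1), q.choose c * v.descFactorial c *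
          (j.choose (t - c) * (p + v - c).descFactorial (t - c)) := by
  set f : ℕ → ℕ → ℕ → ℕ := fun a b c => j.choose a * (j - a).choose b * q.choose c *
    (p.descFactorial a * (v.descFactorial b * (v - b).descFactorial c)) with hf
  have hL : ∑ a ∈ range (t + 1),
        j.choose a * p.descFactorial a * ((j + q - a).choose (t - a) * v.descFactorial (t - a))
      = ∑ a ∈ range (t + 1), ∑ b ∈ range (t + 1 - a), f a b (t - a - b) := by
    refine sum_congr rfl fun a ha => ?_
    obtain ha' | ha' := le_or_gt a j
    · rw [show j + q - a = (j - a) + q by omega, choose_mul_descFactorial_eq_sum,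
        show t - a + 1 = t + 1 - a by have := mem_range.1 ha; omega, mul_sum]
      exact sum_congr rfl fun b _ => by simp only [hf]; ring
    · simp [hf, choose_eq_zero_of_lt ha']
  have hR : ∑ c ∈ range (t + 1),
        q.choose c * v.descFactorial c * (j.choose (t - c) * (p + v - c).descFactorial (t - c))
      = ∑ m ∈ range (t + 1), ∑ a ∈ range (m + 1), f a (m - a) (t - a - (m - a)) := by
    rw [← sum_range_reflect]
    refine sum_congr rfl fun m hm => ?_
    have hm : m ≤ t := Nat.lt_succ_iff.1 (mem_range.1 hm)
    rw [show t + 1 - 1 - m = t - m by omega, show t - (t - m) = m by omega]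
    have hterm : ∀ a ∈ range (m + 1), f a (m - a) (t - a - (m - a))
        = q.choose (t - m) * v.descFactorial (t - m) * j.choose m
          * (m.choose a * (p.descFactorial a * (v - (t - m)).descFactorial (m - a))) := by
      intro a ha
      have ha : a ≤ m := Nat.lt_succ_iff.1 (mem_range.1 ha)
      rw [show t - a - (m - a) = t - m by omega]
      simp only [hf]
      rw [descFactorial_mul_descFactorial_sub_comm v, ← choose_mul ha]
      ring
    rw [sum_congr rfl hterm, ← Finset.mul_sum]
    obtain hv | hv := le_or_gt (t - m) v
    · rw [show p + v - (t - m) = p + (v - (t - m)) by omega, descFactorial_add_eq_sum]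
      ring
    · simp [descFactorial_eq_zero_iff_lt.2 hv]
  rw [hL, hR]
  exact (sum_range_diag_flip (t + 1) fun a b => f a b (t - a - b)).symm

end Nat

theorem Finset.sum_smul_sum_smul_eq_sum_diag {R M : Type*} [Semiring R] [AddCommMonoid M]
    [Module R M] (N : ℕ) (a : ℕ → R) (b : ℕ → ℕ → R) (g : ℕ → ℕ → M) (T : ℕ → M)
    (hg : ∀ μ ν, a μ * b μ ν ≠ 0 → g μ ν = T (μ + ν)) :
    ∑ μ ∈ range N, a μ • ∑ ν ∈ range (N - μ), b μ ν • g μ ν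
      = ∑ t ∈ range N, (∑ α ∈ range (t + 1), a α * b α (t - α)) • T t := by
  simp_rw [smul_sum, smul_smul]
  rw [← sum_range_diag_flip]
  refine sum_congr rfl fun t _ => ?_
  rw [sum_smul]
  refine sum_congr rfl fun α hα => ?_
  by_cases h : a α * b α (t - α) = 0
  · simp [h]
  · rw [hg _ _ h, Nat.add_sub_cancel' (Nat.lt_succ_iff.1 (mem_range.1 hα))]

/-- The coefficient of `a^(p-μ) b^(j-μ) c^μ` in `bʲ aᵖ` in `U(𝔥)`, where `[a, b] = c`. -/
def heisCoeff (j p μ : ℕ) : F := (-1 : F) ^ μ * μ.factorial * j.choose μ * p.choose μ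

theorem heisCoeff_eq (j p μ : ℕ) :
    heisCoeff F j p μ = (-1) ^ μ * ((j.choose μ * p.descFactorial μ : ℕ) : F) := by
  rw [heisCoeff, Nat.descFactorial_eq_factorial_mul_choose]
  push_cast
  ring

theorem le_of_heisCoeff_ne_zero {j p μ : ℕ} (h : heisCoeff F j p μ ≠ 0) : μ ≤ j ∧ μ ≤ p := by
  contrapose! h
  obtain hj | hj := le_or_gt μ j
  · simp [heisCoeff, Nat.choose_eq_zero_of_lt (h hj)]
  · simp [heisCoeff, Nat.choose_eq_zero_of_lt hj]

@[simp] theorem heisCoeff_zero (j p : ℕ) : heisCoeff F j p 0 = 1 := by simp [heisCoeff]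

@[simp] theorem heisCoeff_one (j p : ℕ) : heisCoeff F j p 1 = -(j * p) := by simp [heisCoeff]

theorem sum_heisCoeff_mul_heisCoeff (j p q v t : ℕ) :
    ∑ α ∈ range (t + 1), heisCoeff F j p α * heisCoeff F (j + q - α) v (t - α)
      = ∑ α ∈ range (t + 1), heisCoeff F q v α * heisCoeff F j (p + v - α) (t - α) := by
  have hsign : ∀ α ∈ range (t + 1), ∀ m n : ℕ,
      (-1 : F) ^ α * (m : F) * ((-1) ^ (t - α) * n) = (-1) ^ t * ((m * n : ℕ) : F) := by
    intro α hα m n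
    rw [← Nat.add_sub_cancel' (Nat.lt_succ_iff.1 (mem_range.1 hα)), Nat.add_sub_cancel_left,
      pow_add]
    push_cast
    ring
  simp only [heisCoeff_eq]
  rw [sum_congr rfl fun α hα => hsign α hα _ _, sum_congr rfl fun α hα => hsign α hα _ _,
    ← mul_sum, ← mul_sum, ← Nat.cast_sum, ← Nat.cast_sum, Nat.sum_choose_mul_descFactorial_comm]

noncomputable def mulHeis (i j k l p q r s : ℕ) : Mon →₀ F :=
  ∑ μ ∈ range (j + 1), heisCoeff F j p μ • t2 F (i + p - μ) (j + q - μ) (k + r + μ) (l + s)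

theorem sum_range_heisCoeff_smul_eq {M : Type*} [AddCommMonoid M] [Module F M] {j n : ℕ}
    (hn : j + 1 ≤ n) (p : ℕ) (g : ℕ → M) :
    ∑ μ ∈ range (j + 1), heisCoeff F j p μ • g μ = ∑ μ ∈ range n, heisCoeff F j p μ • g μ := by
  refine sum_subset (range_subset_range.2 hn) fun μ _ hμ => ?_
  have hzero : heisCoeff F j p μ = 0 := by
    by_contra h
    exact hμ (mem_range.2 (Nat.lt_succ_of_le (le_of_heisCoeff_ne_zero F h).1))
  rw [hzero, zero_smul]

theorem mulHeis_assoc (i j k l p q r s v w x y : ℕ) :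
    ∑ μ ∈ range (j + 1),
        heisCoeff F j p μ • mulHeis F (i + p - μ) (j + q - μ) (k + r + μ) (l + s) v w x y
      = ∑ ν ∈ range (q + 1),
        heisCoeff F q v ν • mulHeis F i j k l (p + v - ν) (q + w - ν) (r + x + ν) (s + y) := by
  set N := j + q + 1
  set T : ℕ → Mon →₀ F := fun t => t2 F (i + p + v - t) (j + q + w - t) (k + r + x + t) (l + s + y)
  have hL : ∑ μ ∈ range (j + 1),
        heisCoeff F j p μ • mulHeis F (i + p - μ) (j + q - μ) (k + r + μ) (l + s) v w x y
      = ∑ t ∈ range N,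
        (∑ α ∈ range (t + 1), heisCoeff F j p α * heisCoeff F (j + q - α) v (t - α)) • T t := by
    rw [sum_range_heisCoeff_smul_eq F (n := N) (by omega), ← sum_smul_sum_smul_eq_sum_diag]
    · refine sum_congr rfl fun μ hμ => ?_
      rw [mulHeis, show j + q - μ + 1 = N - μ by have := mem_range.1 hμ; omega]
    · intro μ ν h
      obtain ⟨hμj, hμp⟩ := le_of_heisCoeff_ne_zero F (left_ne_zero_of_mul h)
      obtain ⟨hν, -⟩ := le_of_heisCoeff_ne_zero F (right_ne_zero_of_mul h)
      simp only [T]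
      congr 1 <;> omega
  have hR : ∑ ν ∈ range (q + 1),
        heisCoeff F q v ν • mulHeis F i j k l (p + v - ν) (q + w - ν) (r + x + ν) (s + y)
      = ∑ t ∈ range N,
        (∑ α ∈ range (t + 1), heisCoeff F q v α * heisCoeff F j (p + v - α) (t - α)) • T t := by
    rw [sum_range_heisCoeff_smul_eq F (n := N) (by omega), ← sum_smul_sum_smul_eq_sum_diag]
    · refine sum_congr rfl fun ν hν => ?_
      by_cases hνq : ν ≤ q
      · rw [mulHeis, sum_range_heisCoeff_smul_eq F (n := N - ν) (by omega)]
      · simp [heisCoeff, Nat.choose_eq_zero_of_lt (not_le.1 hνq)]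
    · intro ν μ h
      obtain ⟨hνq, hνv⟩ := le_of_heisCoeff_ne_zero F (left_ne_zero_of_mul h)
      obtain ⟨-, hμ⟩ := le_of_heisCoeff_ne_zero F (right_ne_zero_of_mul h)
      simp only [T]
      congr 1 <;> omega
  rw [hL, hR]
  simp_rw [sum_heisCoeff_mul_heisCoeff]

noncomputable def mulRightMon (n : Mon) : (Mon →₀ F) →ₗ[F] Mon →₀ F :=
  Finsupp.lsum F fun m => LinearMap.toSpanSingleton F _ (mulMon F m n)

noncomputable def mulLeftMon (m : Mon) : (Mon →₀ F) →ₗ[F] Mon →₀ F :=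
  Finsupp.lsum F fun n => LinearMap.toSpanSingleton F _ (mulMon F m n)

theorem mulA_t2_right (x : Mon →₀ F) (a b c d : ℕ) :
    mulA F x (t2 F a b c d) = mulRightMon F (.inl (a, b, c, d)) x := by
  rw [mulA, mulRightMon, Finsupp.lsum_apply]
  exact Finsupp.sum_congr fun m _ => by simp [t2]

theorem mulA_t2_left (a b c d : ℕ) (y : Mon →₀ F) :
    mulA F (t2 F a b c d) y = mulLeftMon F (.inl (a, b, c, d)) y := by
  rw [mulA, t2, Finsupp.sum_single_index (by simp), mulLeftMon, Finsupp.lsum_apply]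
  exact Finsupp.sum_congr fun n _ => by simp

@[simp] theorem mulRightMon_t2 (n : Mon) (a b c d : ℕ) :
    mulRightMon F n (t2 F a b c d) = mulMon F (.inl (a, b, c, d)) n := by
  simp [mulRightMon, t2]

@[simp] theorem mulRightMon_t1 (n : Mon) (a b d : ℕ) :
    mulRightMon F n (t1 F a b d) = mulMon F (.inr (a, b, d)) n := by
  simp [mulRightMon, t1]

@[simp] theorem mulLeftMon_t2 (m : Mon) (a b c d : ℕ) :
    mulLeftMon F m (t2 F a b c d) = mulMon F m (.inl (a, b, c, d)) := by
  simp [mulLeftMon, t2]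

@[simp] theorem mulLeftMon_t1 (m : Mon) (a b d : ℕ) :
    mulLeftMon F m (t1 F a b d) = mulMon F m (.inr (a, b, d)) := by
  simp [mulLeftMon, t1]

def cocycleCoeff (i j l p q s : ℕ) : F :=
  (i : F) * j * s / 6 - (i : F) * l * q / 6 + (j : F) * l * p / 2
    + (j : F) * p * s / 3 - (l : F) * p * q / 3

noncomputable def mulCocycle (i j k l p q r s : ℕ) : Mon →₀ F :=
  (if k = 0 ∧ r = 0 then cocycleCoeff F i j l p q s • t1 F (i + p - 1) (j + q - 1) (l + s - 1)
    else 0)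
  - (if k = 0 ∧ r = 1 then (l : F) • t1 F (i + p) (j + q) (l + s - 1) else 0)

theorem mulMon_inl_inl (i j k l p q r s : ℕ) :
    mulMon F (.inl (i, j, k, l)) (.inl (p, q, r, s))
      = mulHeis F i j k l p q r s + mulCocycle F i j k l p q r s :=
  add_sub_assoc _ _ _

theorem mulCocycle_eq_zero_of_left_ne_zero {i j k l p q r s : ℕ} (hk : k ≠ 0) :
    mulCocycle F i j k l p q r s = 0 := by
  simp [mulCocycle, hk]

theorem mulCocycle_eq_zero_of_two_le_right {i j k l p q r s : ℕ} (hr : 2 ≤ r) :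
    mulCocycle F i j k l p q r s = 0 := by
  simp [mulCocycle, show r ≠ 0 by omega, show r ≠ 1 by omega]

theorem sum_smul_mulCocycle_left (i j k l p q r s v w x y : ℕ) :
    ∑ μ ∈ range (j + 1),
        heisCoeff F j p μ • mulCocycle F (i + p - μ) (j + q - μ) (k + r + μ) (l + s) v w x y
      = mulCocycle F (i + p) (j + q) (k + r) (l + s) v w x y := by
  rw [sum_eq_single 0
    (fun μ _ hμ => by rw [mulCocycle_eq_zero_of_left_ne_zero F (by omega), smul_zero]) (by simp)]
  simp

theorem sum_smul_mulCocycle_right (i j k l p q r s v w x y : ℕ) :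
    ∑ ν ∈ range (q + 1),
        heisCoeff F q v ν • mulCocycle F i j k l (p + v - ν) (q + w - ν) (r + x + ν) (s + y)
      = mulCocycle F i j k l (p + v) (q + w) (r + x) (s + y)
        - ((q : F) * v) • mulCocycle F i j k l (p + v - 1) (q + w - 1) (r + x + 1) (s + y) := by
  rw [sum_eq_add 0 1 zero_ne_one
    (fun ν _ hν => by rw [mulCocycle_eq_zero_of_two_le_right F (by omega), smul_zero]) (by simp)
    (fun h => by simp [show q = 0 by simpa using h])]
  simp [sub_eq_add_neg]

theorem assocA_t2_eq_coboundary (i j k l p q r s v w x y : ℕ) :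
    assocA F (t2 F i j k l) (t2 F p q r s) (t2 F v w x y)
      = mulCocycle F (i + p) (j + q) (k + r) (l + s) v w x y
        + mulRightMon F (.inl (v, w, x, y)) (mulCocycle F i j k l p q r s)
        - mulCocycle F i j k l (p + v) (q + w) (r + x) (s + y)
        + ((q : F) * v) • mulCocycle F i j k l (p + v - 1) (q + w - 1) (r + x + 1) (s + y)
        - mulLeftMon F (.inl (i, j, k, l)) (mulCocycle F p q r s v w x y) := by
  have hright : mulRightMon F (.inl (v, w, x, y)) (mulHeis F i j k l p q r s)
      = ∑ μ ∈ range (j + 1),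
          heisCoeff F j p μ • mulHeis F (i + p - μ) (j + q - μ) (k + r + μ) (l + s) v w x y
        + mulCocycle F (i + p) (j + q) (k + r) (l + s) v w x y := by
    simp only [mulHeis, map_sum, map_smul, mulRightMon_t2, mulMon_inl_inl, smul_add,
      sum_add_distrib, ← sum_smul_mulCocycle_left F i j k l p q r s v w x y]
  have hleft : mulLeftMon F (.inl (i, j, k, l)) (mulHeis F p q r s v w x y)
      = ∑ ν ∈ range (q + 1),
          heisCoeff F q v ν • mulHeis F i j k l (p + v - ν) (q + w - ν) (r + x + ν) (s + y)
        + (mulCocycle F i j k l (p + v) (q + w) (r + x) (s + y)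
          - ((q : F) * v) • mulCocycle F i j k l (p + v - 1) (q + w - 1) (r + x + 1) (s + y)) := by
    simp only [mulHeis, map_sum, map_smul, mulLeftMon_t2, mulMon_inl_inl, smul_add,
      sum_add_distrib, ← sum_smul_mulCocycle_right F i j k l p q r s v w x y]
  simp only [assocA, mulA_t2_left, mulA_t2_right, mulRightMon_t2, mulMon_inl_inl, map_add]
  rw [hright, hleft, mulHeis_assoc]
  abel

/-- The exponents `i + p - 1`, ... of `mulCocycle` are truncated subtractions, but they are
only ever truncated where the coefficient in front vanishes. -/
theorem smul_t1_congr {c : F} {a b d a' b' d' : ℕ} (h : c ≠ 0 → a = a' ∧ b = b' ∧ d = d') :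
    c • t1 F a b d = c • t1 F a' b' d' := by
  by_cases hc : c = 0
  · simp [hc]
  · obtain ⟨rfl, rfl, rfl⟩ := h hc
    rfl

theorem natCast_smul_t1_congr {n a b d a' b' d' : ℕ} (h : n ≠ 0 → a = a' ∧ b = b' ∧ d = d') :
    (n : F) • t1 F a b d = (n : F) • t1 F a' b' d' :=
  smul_t1_congr F fun hn => h (by rintro rfl; simp at hn)

theorem one_le_of_cocycleCoeff_ne_zero {i j l p q s : ℕ} (h : cocycleCoeff F i j l p q s ≠ 0) :
    1 ≤ i + p ∧ 1 ≤ j + q ∧ 1 ≤ l + s := by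
  contrapose! h
  obtain h | h | h : (i = 0 ∧ p = 0) ∨ (j = 0 ∧ q = 0) ∨ (l = 0 ∧ s = 0) := by omega
  all_goals simp [cocycleCoeff, h.1, h.2]

theorem cocycleCoeff_smul_t1_add_right (i j l p q s v w y : ℕ) :
    cocycleCoeff F i j l p q s • t1 F (i + p - 1 + v) (j + q - 1 + w) (l + s - 1 + y)
      = cocycleCoeff F i j l p q s • t1 F (i + p + v - 1) (j + q + w - 1) (l + s + y - 1) :=
  smul_t1_congr F fun h => by have := one_le_of_cocycleCoeff_ne_zero F h; omega

theorem cocycleCoeff_smul_t1_add_left (i j l p q s v w y : ℕ) :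
    cocycleCoeff F p q s v w y • t1 F (i + (p + v - 1)) (j + (q + w - 1)) (l + (s + y - 1))
      = cocycleCoeff F p q s v w y • t1 F (i + p + v - 1) (j + q + w - 1) (l + s + y - 1) :=
  smul_t1_congr F fun h => by have := one_le_of_cocycleCoeff_ne_zero F h; omega

theorem cocycleCoeff_coboundary (h2 : (2 : F) ≠ 0) (h3 : (3 : F) ≠ 0) (i j l p q s v w y : ℕ) :
    cocycleCoeff F (i + p) (j + q) (l + s) v w y + cocycleCoeff F i j l p q s
        - cocycleCoeff F i j l (p + v) (q + w) (s + y) - q * v * l - cocycleCoeff F p q s v w y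
      = 1 / 6 * ((i : F) * q * y - (i : F) * s * w - (j : F) * p * y
            + (j : F) * s * v + (l : F) * p * w - (l : F) * q * v) := by
  have h6 : (6 : F) ≠ 0 := by
    rw [show (6 : F) = 2 * 3 by norm_num]
    exact mul_ne_zero h2 h3
  simp only [cocycleCoeff, Nat.cast_add]
  field_simp
  ring

theorem assocA_t2_of_c_eq_zero (h2 : (2 : F) ≠ 0) (h3 : (3 : F) ≠ 0) (i j l p q s v w y : ℕ) :
    assocA F (t2 F i j 0 l) (t2 F p q 0 s) (t2 F v w 0 y)
      = ((1 / 6 : F) * ((i : F) * q * y - (i : F) * s * w - (j : F) * p * y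
            + (j : F) * s * v + (l : F) * p * w - (l : F) * q * v)) •
          t1 F (i + p + v - 1) (j + q + w - 1) (l + s + y - 1) := by
  have hqv : ((q : F) * v * l) • t1 F (i + (p + v - 1)) (j + (q + w - 1)) (l + s + y - 1)
      = ((q : F) * v * l) • t1 F (i + p + v - 1) (j + q + w - 1) (l + s + y - 1) :=
    smul_t1_congr F fun h => by
      have hq : q ≠ 0 := by rintro rfl; simp at h
      have hv : v ≠ 0 := by rintro rfl; simp at h
      omega
  rw [assocA_t2_eq_coboundary, ← cocycleCoeff_coboundary F h2 h3]
  simp only [mulCocycle, mulMon, mulRightMon_t1, mulLeftMon_t1, map_smul, and_self, and_false,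
    zero_ne_one, one_ne_zero, ↓reduceIte, add_zero, zero_add, sub_zero, zero_sub, smul_neg,
    smul_smul, ← add_assoc, cocycleCoeff_smul_t1_add_right, cocycleCoeff_smul_t1_add_left, hqv]
  module

theorem assocA_t2_eq_zero {i j k l p q r s v w x y : ℕ} (h : ¬(k = 0 ∧ r = 0 ∧ x = 0)) :
    assocA F (t2 F i j k l) (t2 F p q r s) (t2 F v w x y) = 0 := by
  have hs : (s : F) • t1 F (i + p + v) (j + q + w) (l + (s + y - 1))
      = (s : F) • t1 F (i + p + v) (j + q + w) (l + s + y - 1) :=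
    natCast_smul_t1_congr F fun _ => by omega
  have hl : (l : F) • t1 F (i + p + v) (j + q + w) (l + s - 1 + y)
      = (l : F) • t1 F (i + p + v) (j + q + w) (l + s + y - 1) :=
    natCast_smul_t1_congr F fun _ => by omega
  rw [assocA_t2_eq_coboundary]
  rcases k with _ | k
  · rcases r with _ | _ | r <;> rcases x with _ | _ | x <;>
      simp [mulCocycle, mulMon, ← add_assoc, hs, hl] at h ⊢
    -- only `r = 0, x = 1` is left, where the coefficients add up to `-(l + s) + l + s`
    module
  · simp [mulCocycle, mulMon, apply_ite (mulLeftMon F _)]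

/-- Corollary `type2associator`: the associator of three type-2 basis monomials
of `A(𝕄)` is
`(aⁱbʲcᵏdˡ, aᵖb^q c^r dˢ, a^v b^w c^x d^y) = δ_{k0} δ_{r0} δ_{x0} (1/6)
(iqy − isw − jpy + jsv + ℓpw − ℓqv) a^{i+p+v−1} b^{j+q+w−1} d^{ℓ+s+y−1} e`. -/
theorem stmt10 (h2 : ringChar F ≠ 2) (h3 : ringChar F ≠ 3)
    (i j k l p q r s v w x y : ℕ) :
    assocA F (t2 F i j k l) (t2 F p q r s) (t2 F v w x y) =
      if k = 0 ∧ r = 0 ∧ x = 0 then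
        ((1 / 6 : F) * ((i : F) * q * y - (i : F) * s * w - (j : F) * p * y
            + (j : F) * s * v + (l : F) * p * w - (l : F) * q * v)) •
          t1 F (i + p + v - 1) (j + q + w - 1) (l + s + y - 1)
      else 0 := by
  split_ifs with h
  · obtain ⟨rfl, rfl, rfl⟩ := h
    exact assocA_t2_of_c_eq_zero F (Ring.two_ne_zero h2)
      (fun h => h3 (CharP.ringChar_of_prime_eq_zero Nat.prime_three (by exact_mod_cast h))) ..
  · exact assocA_t2_eq_zero F h
end

section
/- Let A be the algebra of the previous context (with basis of type-1 monomials a^i b^j d^ℓ e and type-2 monomials a^i b^j c^k d^ℓ, and the stated multiplication). Then every associator involving at least one type-1 basis monomial vanishes: (m, m', m'') = (m', m, m'') = (m', m'', m) = 0 whenever m is a type-1 monomial and m', m'' are arbitrary basis monomials. -/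
/-!
Let `φ : A → F[a,b,d]` send a c-free type-2 monomial `aⁱ bʲ dˡ` to itself and every other basis
monomial to `0`, and identify the span of the type-1 monomials with `F[a,b,d] · e`. The structure
constants say that type-1 elements only see `φ` of their partner: `(p e) x = (p φ(x)) e` and
`x (p e) = (φ(x) p) e`. Moreover `φ` is multiplicative, because the only c-free term in the
product of two type-2 monomials is its `μ = 0` term. Hence every associator with an entry `p e`
is the difference of two equal products in the commutative ring `F[a,b,d]`.
-/

open Finset

variable (F : Type*) [Field F]

section TypeOne

open AddMonoidAlgebra

lemma mulA_single_single (m m' : Mon) (a b : F) :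
    mulA F (Finsupp.single m a) (Finsupp.single m' b) = (a * b) • mulMon F m m' := by
  simp [mulA]

lemma mulA_add_left (x x' y : Mon →₀ F) :
    mulA F (x + x') y = mulA F x y + mulA F x' y := by
  unfold mulA
  apply Finsupp.sum_add_index' <;> intros <;> simp [add_mul, add_smul, Finsupp.sum_add]

lemma mulA_smul_left (a : F) (x y : Mon →₀ F) :
    mulA F (a • x) y = a • mulA F x y := by
  unfold mulA
  rw [Finsupp.sum_smul_index (by simp), Finsupp.smul_sum]
  simp only [Finsupp.smul_sum, smul_smul, mul_assoc]

lemma mulA_add_right (x y y' : Mon →₀ F) :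
    mulA F x (y + y') = mulA F x y + mulA F x y' := by
  unfold mulA
  rw [← Finsupp.sum_add]
  refine Finsupp.sum_congr fun m _ => ?_
  apply Finsupp.sum_add_index' <;> intros <;> simp [mul_add, add_smul]

lemma mulA_smul_right (a : F) (x y : Mon →₀ F) :
    mulA F x (a • y) = a • mulA F x y := by
  unfold mulA
  simp only [Finsupp.smul_sum]
  refine Finsupp.sum_congr fun m _ => ?_
  rw [Finsupp.sum_smul_index (by simp)]
  simp only [smul_smul, mul_left_comm]

noncomputable def mulABilin : (Mon →₀ F) →ₗ[F] (Mon →₀ F) →ₗ[F] (Mon →₀ F) :=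
  LinearMap.mk₂ F (mulA F) (mulA_add_left F) (mulA_smul_left F) (mulA_add_right F)
    (mulA_smul_right F)

lemma mulABilin_apply (x y : Mon →₀ F) : mulABilin F x y = mulA F x y := rfl

/-- The map `φ`; the monomial `aⁱ bʲ dˡ` of `F[a,b,d]` is `single (i, j, l) 1`. -/
noncomputable def cFreePart : (Mon →₀ F) →ₗ[F] F[ℕ × ℕ × ℕ] :=
  (coeffLinearEquiv F).symm.toLinearMap ∘ₗ
    Finsupp.lcomapDomain (fun e : ℕ × ℕ × ℕ => (Sum.inl (e.1, e.2.1, 0, e.2.2) : Mon))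
      (fun e e' h => by simpa [Prod.ext_iff] using h)

/-- `p ↦ p e`. -/
noncomputable def mulE : F[ℕ × ℕ × ℕ] →ₗ[F] (Mon →₀ F) :=
  Finsupp.lmapDomain F F Sum.inr ∘ₗ (coeffLinearEquiv F).toLinearMap

lemma coeff_cFreePart (x : Mon →₀ F) (i j l : ℕ) :
    (cFreePart F x).coeff (i, j, l) = x (Sum.inl (i, j, 0, l)) := rfl

lemma mulE_single (e : ℕ × ℕ × ℕ) (a : F) :
    mulE F (single e a) = Finsupp.single (Sum.inr e) a := by
  simp [mulE, coeff_single]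

lemma t1_eq_mulE (i j l : ℕ) : t1 F i j l = mulE F (single (i, j, l) 1) := by
  rw [mulE_single, t1]

lemma cFreePart_single_inl (i j k l : ℕ) (a : F) :
    cFreePart F (Finsupp.single (Sum.inl (i, j, k, l)) a) =
      if k = 0 then single (i, j, l) a else 0 := by
  ext ⟨p, q, s⟩
  split_ifs with hk
  · simp [coeff_cFreePart, Finsupp.single_apply, hk]
  · simp [coeff_cFreePart, Ne.symm hk]

lemma cFreePart_single_inr (e : ℕ × ℕ × ℕ) (a : F) :
    cFreePart F (Finsupp.single (Sum.inr e) a) = 0 := by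
  ext ⟨p, q, s⟩
  simp [coeff_cFreePart]

lemma cFreePart_t2 (i j k l : ℕ) :
    cFreePart F (t2 F i j k l) = if k = 0 then single (i, j, l) 1 else 0 :=
  cFreePart_single_inl F i j k l 1

lemma cFreePart_mulE (f : F[ℕ × ℕ × ℕ]) : cFreePart F (mulE F f) = 0 := by
  induction f using AddMonoidAlgebra.induction_linear with
  | zero => simp
  | add f g hf hg => simp [hf, hg]
  | single e a => rw [mulE_single, cFreePart_single_inr]

lemma mulMon_inr_left (e : ℕ × ℕ × ℕ) (m : Mon) :
    mulMon F (Sum.inr e) m = mulE F (single e 1 * cFreePart F (Finsupp.single m 1)) := by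
  rcases m with ⟨p, q, r, s⟩ | e'
  · rw [cFreePart_single_inl]
    split_ifs with hr
    · simp [mulMon, hr, single_mul_single, mulE_single, t1]
      rfl
    · simp [mulMon, hr]
  · simp [mulMon, cFreePart_single_inr]

lemma mulMon_inr_right (e : ℕ × ℕ × ℕ) (m : Mon) :
    mulMon F m (Sum.inr e) = mulE F (cFreePart F (Finsupp.single m 1) * single e 1) := by
  rcases m with ⟨p, q, r, s⟩ | e'
  · rw [cFreePart_single_inl]
    split_ifs with hr
    · simp [mulMon, hr, single_mul_single, mulE_single, t1]
      rfl
    · simp [mulMon, hr]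
  · simp [mulMon, cFreePart_single_inr]

lemma cFreePart_mulMon (m m' : Mon) :
    cFreePart F (mulMon F m m') =
      cFreePart F (Finsupp.single m 1) * cFreePart F (Finsupp.single m' 1) := by
  rcases m with ⟨i, j, k, l⟩ | e
  · rcases m' with ⟨p, q, r, s⟩ | e'
    · simp only [mulMon, map_sub, map_add, map_sum, map_smul, cFreePart_t2, t1_eq_mulE,
        apply_ite (cFreePart F), cFreePart_mulE, map_zero, smul_zero, ite_self, add_zero,
        sub_zero, cFreePart_single_inl, Nat.add_eq_zero_iff]
      rw [Finset.sum_eq_single_of_mem 0 (by simp) (fun μ _ hμ => by simp [hμ])]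
      by_cases hk : k = 0 <;> by_cases hr : r = 0 <;> simp [hk, hr, single_mul_single]
    · rw [mulMon_inr_right, cFreePart_mulE, cFreePart_single_inr, mul_zero]
  · rw [mulMon_inr_left, cFreePart_mulE, cFreePart_single_inr, zero_mul]

lemma mulA_mulE_left (f : F[ℕ × ℕ × ℕ]) (x : Mon →₀ F) :
    mulA F (mulE F f) x = mulE F (f * cFreePart F x) := by
  have key : (mulABilin F).comp (mulE F) =
      ((LinearMap.mul F F[ℕ × ℕ × ℕ]).compl₂ (cFreePart F)).compr₂ (mulE F) := by
    ext e m
    simp [mulABilin_apply, mulE_single, mulA_single_single, mulMon_inr_left]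
  exact LinearMap.congr_fun₂ key f x

lemma mulA_mulE_right (f : F[ℕ × ℕ × ℕ]) (x : Mon →₀ F) :
    mulA F x (mulE F f) = mulE F (cFreePart F x * f) := by
  have key : (mulABilin F).compl₂ (mulE F) =
      ((LinearMap.mul F F[ℕ × ℕ × ℕ]).comp (cFreePart F)).compr₂ (mulE F) := by
    ext m e
    simp [mulABilin_apply, mulE_single, mulA_single_single, mulMon_inr_right]
  exact LinearMap.congr_fun₂ key x f

lemma cFreePart_mulA (x y : Mon →₀ F) :
    cFreePart F (mulA F x y) = cFreePart F x * cFreePart F y := by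
  have key : (mulABilin F).compr₂ (cFreePart F) =
      (LinearMap.mul F F[ℕ × ℕ × ℕ]).compl₁₂ (cFreePart F) (cFreePart F) := by
    ext m m'
    simp [mulABilin_apply, mulA_single_single, cFreePart_mulMon]
  exact LinearMap.congr_fun₂ key x y

lemma assocA_mulE_left (f : F[ℕ × ℕ × ℕ]) (x y : Mon →₀ F) :
    assocA F (mulE F f) x y = 0 := by
  rw [assocA, mulA_mulE_left, mulA_mulE_left, mulA_mulE_left, cFreePart_mulA, mul_assoc,
    sub_self]

lemma assocA_mulE_middle (f : F[ℕ × ℕ × ℕ]) (x y : Mon →₀ F) :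
    assocA F x (mulE F f) y = 0 := by
  rw [assocA, mulA_mulE_right, mulA_mulE_left, mulA_mulE_left, mulA_mulE_right, mul_assoc,
    sub_self]

lemma assocA_mulE_right (f : F[ℕ × ℕ × ℕ]) (x y : Mon →₀ F) :
    assocA F x y (mulE F f) = 0 := by
  rw [assocA, mulA_mulE_right, mulA_mulE_right, mulA_mulE_right, cFreePart_mulA, mul_assoc,
    sub_self]

end TypeOne

theorem stmt11
    (i j l : ℕ) (m' m'' : Mon) :
    assocA F (t1 F i j l) (Finsupp.single m' (1:F)) (Finsupp.single m'' (1:F)) = 0 ∧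
    assocA F (Finsupp.single m' (1:F)) (t1 F i j l) (Finsupp.single m'' (1:F)) = 0 ∧
    assocA F (Finsupp.single m' (1:F)) (Finsupp.single m'' (1:F)) (t1 F i j l) = 0 := by
  rw [t1_eq_mulE]
  exact ⟨assocA_mulE_left F _ _ _, assocA_mulE_middle F _ _ _, assocA_mulE_right F _ _ _⟩
end
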